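/- For all natural numbers m and n there exist spheres S₁, …, S_m and T₁, …, T_n in ℝ³ (each given by a center and a positive radius) such that: (i) every Sᵢ is externally tangent to every Tⱼ, i.e. the distance between their centers equals the sum of their radii; (ii) all m + n spheres are pairwise distinct; (iii) no two spheres within the same family are tangent. (Hence the complete bipartite graph K_{m,n} is realizable by a nondegenerate family of tangent spheres in ℝ³.) -/

import Mathlib

noncomputable section

/-- Euclidean 3-space. -/
abbrev Space3 := EuclideanSpace ℝ (Fin 3)

/-- Two spheres (center, radius) are tangent: they are distinct and the distance between
centers equals the sum (external) or the absolute difference (internal) of the radii. -/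
def TangentS (A B : Space3 × ℝ) : Prop :=
  A ≠ B ∧ (dist A.1 B.1 = A.2 + B.2 ∨ dist A.1 B.1 = |A.2 - B.2|)

def pt (a b c : ℝ) : Space3 := (WithLp.equiv 2 (Fin 3 → ℝ)).symm ![a,b,c]

lemma dist_pt (a b c a' b' c' : ℝ) :
    dist (pt a b c) (pt a' b' c') = Real.sqrt ((a-a')^2 + (b-b')^2 + (c-c')^2) := by
  rw [EuclideanSpace.dist_eq]
  simp [pt, Fin.sum_univ_three, Real.dist_eq, sq_abs]

lemma pt_inj {a b c a' b' c' : ℝ} (h : pt a b c = pt a' b' c') : a = a' ∧ b = b' ∧ c = c' := by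
  have h0 := congrFun (congrArg (WithLp.equiv 2 (Fin 3 → ℝ)) h)
  exact ⟨h0 0, h0 1, h0 2⟩


/-- K_{m,n} is realizable by a nondegenerate family of tangent spheres in ℝ³. -/
theorem bipartite_realizable_in_spheres (m n : ℕ) :
    ∃ (S : Fin m → Space3 × ℝ) (T : Fin n → Space3 × ℝ),
      (∀ i, 0 < (S i).2) ∧ (∀ j, 0 < (T j).2) ∧
      (∀ i j, dist (S i).1 (T j).1 = (S i).2 + (T j).2) ∧
      (∀ i j, i ≠ j → S i ≠ S j) ∧
      (∀ i j, i ≠ j → T i ≠ T j) ∧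
      (∀ i j, S i ≠ T j) ∧
      (∀ i j, i ≠ j → ¬ TangentS (S i) (S j)) ∧
      (∀ i j, i ≠ j → ¬ TangentS (T i) (T j)) := by
  classical
  set t : Fin m → ℝ := fun i => (i : ℝ) + 2 with ht
  have ht2 : ∀ i, 2 ≤ t i := fun i => by
    have : (0:ℝ) ≤ (i:ℝ) := Nat.cast_nonneg _
    simp only [ht]; linarith
  have htpos : ∀ i, (0:ℝ) < 1 + t i ^ 2 := fun i => by nlinarith [ht2 i]
  have htinj : ∀ i j : Fin m, t i = t j → i = j := fun i j hij => by
    have : ((i:ℕ):ℝ) = ((j:ℕ):ℝ) := by simpa [ht] using hij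
    exact Fin.ext (Nat.cast_injective this)
  set px : Fin m → ℝ := fun i => (1 - t i ^ 2) / (1 + t i ^ 2) with hpx
  set py : Fin m → ℝ := fun i => 2 * t i / (1 + t i ^ 2) with hpy
  have hcirc : ∀ i, px i ^ 2 + py i ^ 2 = 1 := fun i => by
    have h0 := (htpos i).ne'
    simp only [hpx, hpy]; rw [div_pow, div_pow, ← add_div, div_eq_one_iff_eq (pow_ne_zero 2 h0)]
    ring
  set h : Fin n → ℝ := fun j => (j : ℝ) + 3 with hh
  have hh3 : ∀ j, 3 ≤ h j := fun j => by
    have : (0:ℝ) ≤ (j:ℝ) := Nat.cast_nonneg _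
    simp only [hh]; linarith
  set u : Fin n → ℝ := fun j => Real.sqrt (1 + h j ^ 2) with hu
  have husq : ∀ j, u j ^ 2 = 1 + h j ^ 2 := fun j =>
    Real.sq_sqrt (by nlinarith [hh3 j])
  have hugt : ∀ j, h j < u j := fun j => by
    nlinarith [husq j, Real.sqrt_nonneg (1 + h j ^ 2), hh3 j]
  set ρ : Fin n → ℝ := fun j => u j - 2 with hρ
  have hρpos : ∀ j, 0 < ρ j := fun j => by
    have := hugt j; have := hh3 j; simp only [hρ]; linarith
  refine ⟨fun i => (pt (px i) (py i) 0, 2), fun j => (pt 0 0 (h j), ρ j), ?_, ?_, ?_, ?_, ?_, ?_, ?_, ?_⟩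
  · intro i; norm_num
  · intro j; exact hρpos j
  · -- tangency
    intro i j
    simp only
    rw [dist_pt]
    have : (px i - 0)^2 + (py i - 0)^2 + (0 - h j)^2 = 1 + h j ^ 2 := by
      linear_combination hcirc i
    rw [this]
    simp only [hρ, hu]; ring
  · -- S injective
    intro i j hij hSij
    apply hij
    have hc := (pt_inj (congrArg Prod.fst hSij)).2.1
    -- py i = py j implies t i = t j since t ≥ 2
    apply htinj
    simp only [hpy] at hc
    rw [div_eq_div_iff (htpos i).ne' (htpos j).ne'] at hc
    have key : (t i - t j) * (1 - t i * t j) = 0 := by linear_combination hc / 2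
    rcases mul_eq_zero.mp key with hk | hk
    · linarith [sub_eq_zero.mp hk]
    · nlinarith [ht2 i, ht2 j]
  · -- T injective
    intro i j hij hTij
    apply hij
    have hc := (pt_inj (congrArg Prod.fst hTij)).2.2
    have : ((i:ℕ):ℝ) = ((j:ℕ):ℝ) := by simpa [hh] using hc
    exact Fin.ext (Nat.cast_injective this)
  · -- S ≠ T : third coord 0 vs h j ≥ 3
    intro i j hST
    have hc := (pt_inj (congrArg Prod.fst hST)).2.2
    have := hh3 j; linarith
  · -- no tangency within S
    intro i j hij ⟨hne, hd⟩
    have hd' : dist (pt (px i) (py i) 0) (pt (px j) (py j) 0)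
        = Real.sqrt ((px i - px j)^2 + (py i - py j)^2 + (0-0:ℝ)^2) := dist_pt _ _ _ _ _ _
    have hle : dist (pt (px i) (py i) 0) (pt (px j) (py j) 0) ≤ 2 := by
      rw [hd']
      have : (px i - px j)^2 + (py i - py j)^2 + (0-0:ℝ)^2 ≤ 4 := by
        nlinarith [hcirc i, hcirc j, sq_nonneg (px i + px j), sq_nonneg (py i + py j)]
      calc Real.sqrt _ ≤ Real.sqrt 4 := Real.sqrt_le_sqrt this
        _ = 2 := by rw [show (4:ℝ) = 2^2 by norm_num, Real.sqrt_sq]; norm_num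
    rcases hd with hd | hd
    · simp only at hd; rw [hd] at hle; norm_num at hle
    · simp only [sub_self, abs_zero] at hd
      have := dist_eq_zero.mp hd
      have hc := (pt_inj this).2.1
      apply hij
      apply htinj
      simp only [hpy] at hc
      rw [div_eq_div_iff (htpos i).ne' (htpos j).ne'] at hc
      have key : (t i - t j) * (1 - t i * t j) = 0 := by linear_combination hc / 2
      rcases mul_eq_zero.mp key with hk | hk
      · linarith [sub_eq_zero.mp hk]
      · nlinarith [ht2 i, ht2 j]
  · -- no tangency within T
    intro j k hjk ⟨hne, hd⟩
    have hd' : dist (pt 0 0 (h j)) (pt (0:ℝ) 0 (h k))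
        = Real.sqrt ((0-0:ℝ)^2 + (0-0:ℝ)^2 + (h j - h k)^2) := dist_pt _ _ _ _ _ _
    have habs : dist (pt 0 0 (h j)) (pt (0:ℝ) 0 (h k)) = |h j - h k| := by
      rw [hd']; rw [show (0-0:ℝ)^2 + (0-0:ℝ)^2 + (h j - h k)^2 = (h j - h k)^2 by ring]
      exact Real.sqrt_sq_eq_abs _
    have hjk' : h j ≠ h k := by
      intro he; apply hjk
      have : ((j:ℕ):ℝ) = ((k:ℕ):ℝ) := by simpa [hh] using he
      exact Fin.ext (Nat.cast_injective this)
    have habslt : |h j - h k| < ρ j + ρ k := by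
      have h1 := hugt j; have h2 := hugt k; have h3 := hh3 j; have h4 := hh3 k
      rw [abs_sub_lt_iff]; constructor <;> simp only [hρ] <;> linarith
    have habsgt : |ρ j - ρ k| < |h j - h k| := by
      have h1 := hugt j; have h2 := hugt k; have h3 := hh3 j; have h4 := hh3 k
      have h5 := husq j; have h6 := husq k
      have hAP : (u j - u k) * (u j + u k) = (h j - h k) * (h j + h k) := by
        linear_combination h5 - h6
      have key : (u j - u k)^2 * (u j + u k)^2 = (h j - h k)^2 * (h j + h k)^2 := by
        rw [← mul_pow, ← mul_pow, hAP]
      have hB2 : 0 < (h j - h k)^2 :=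
        lt_of_le_of_ne (sq_nonneg _) (Ne.symm (pow_ne_zero 2 (sub_ne_zero.mpr hjk')))
      have hP2 : 0 < (u j + u k)^2 := by nlinarith
      have hQP : (h j + h k)^2 < (u j + u k)^2 := by nlinarith
      have hsq : (ρ j - ρ k)^2 < (h j - h k)^2 := by
        have hρu : (ρ j - ρ k)^2 = (u j - u k)^2 := by simp only [hρ]; ring
        rw [hρu]
        have step1 : (h j - h k)^2 * (h j + h k)^2 < (h j - h k)^2 * (u j + u k)^2 :=
          mul_lt_mul_of_pos_left hQP hB2
        rw [← key] at step1
        exact lt_of_mul_lt_mul_right step1 hP2.le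
      have hsq' : |ρ j - ρ k| ^ 2 < |h j - h k| ^ 2 := by
        rw [sq_abs, sq_abs]; exact hsq
      exact lt_of_pow_lt_pow_left₀ 2 (abs_nonneg _) hsq'
    rcases hd with hd | hd
    · rw [habs] at hd; simp only at hd; rw [hd] at habslt; linarith
    · rw [habs] at hd; simp only at hd; rw [hd] at habsgt; linarith
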